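/- Let V : ℝ → ℝ be measurable and ε > 0. For every probability density u on ℝ with finite second moment such that ∫_ℝ V(x)u(x)dx is well defined, Υ_ε^-(u) ≥ −ε/4 − 4ε e⁻¹ + ∫_ℝ (V(x) − (ε/4)x²) u(x) dx. -/

import Mathlib

open MeasureTheory Real

/-- A probability density on `ℝ`. -/
def IsProbDensity (u : ℝ → ℝ) : Prop :=
  Measurable u ∧ (∀ x, 0 ≤ u x) ∧ (∫ x : ℝ, u x) = 1

/-- The truncated free energy `Υ_ε^-(u)`. -/
noncomputable def freeEnergyMinus (V : ℝ → ℝ) (ε : ℝ) (u : ℝ → ℝ) : ℝ :=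
  ε / 2 * (∫ x : ℝ, if u x < 1 then u x * Real.log (u x) else 0)
    + ∫ x : ℝ, V x * u x

/-
Gibbs' inequality `a log a ≥ a log b + a - b`, with `b = exp (-x²/2)`, gives
`u log u ≥ -(x²/2) u - exp (-x²/2)` wherever `u < 1`, and the right side is `≤ 0` everywhere, so it
also bounds the truncated integrand `u log u · 1_{u<1}`. Integrating, the truncated entropy is at
least `-(1/2) ∫ x² u - √(2π)`, and `√(2π) ≤ 1/2 + 8/e`.
-/

lemma mul_log_add_sub_le_mul_log {a b : ℝ} (ha : 0 ≤ a) (hb : 0 < b) :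
    a * log b + a - b ≤ a * log a := by
  rcases ha.eq_or_lt with rfl | ha
  · simpa using hb.le
  · have h := log_le_sub_one_of_pos (div_pos hb ha)
    rw [log_div hb.ne' ha.ne'] at h
    have := mul_le_mul_of_nonneg_left h ha.le
    rw [mul_sub, mul_sub, mul_div_cancel₀ b ha.ne'] at this
    linarith

lemma neg_mul_sub_exp_neg_le_ite_mul_log {s t : ℝ} (hs : 0 ≤ s) (ht : 0 ≤ t) :
    -(s * t) - exp (-s) ≤ if t < 1 then t * log t else 0 := by
  split_ifs
  · have := mul_log_add_sub_le_mul_log ht (exp_pos (-s))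
    rw [log_exp] at this
    linarith
  · linarith [mul_nonneg hs ht, exp_pos (-s)]

lemma integral_ite_mul_log_ge {α : Type*} [MeasurableSpace α] {μ : Measure α} {u s : α → ℝ}
    (hu : ∀ x, 0 ≤ u x) (hs : ∀ x, 0 ≤ s x) (hsu : Integrable (fun x => s x * u x) μ)
    (hexp : Integrable (fun x => exp (-s x)) μ) :
    -(∫ x, s x * u x ∂μ) - ∫ x, exp (-s x) ∂μ
      ≤ ∫ x, (if u x < 1 then u x * log (u x) else 0) ∂μ := by
  have hle : ∫ x, -(if u x < 1 then u x * log (u x) else 0) ∂μ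
      ≤ ∫ x, (s x * u x + exp (-s x)) ∂μ := by
    refine integral_mono_of_nonneg (.of_forall fun x => ?_) (hsu.add hexp)
      (.of_forall fun x => ?_)
    · have : (if u x < 1 then u x * log (u x) else 0) ≤ 0 := by
        split_ifs with h
        exacts [mul_log_nonpos (hu x) h.le, le_rfl]
      simpa using this
    · have := neg_mul_sub_exp_neg_le_ite_mul_log (hs x) (hu x)
      linarith
  rw [integral_neg, integral_add hsu hexp] at hle
  linarith

lemma integral_exp_neg_sq_div_two : ∫ x : ℝ, exp (-(x ^ 2 / 2)) = √(2 * π) := by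
  have h := integral_gaussian (1 / 2)
  rw [div_div_eq_mul_div, div_one, mul_comm π] at h
  simpa [neg_div, div_eq_inv_mul] using h

lemma integrable_exp_neg_sq_div_two : Integrable fun x : ℝ => exp (-(x ^ 2 / 2)) := by
  simpa [neg_div, div_eq_inv_mul] using integrable_exp_neg_mul_sq (b := 1 / 2) (by norm_num)

lemma sqrt_two_mul_pi_le : √(2 * π) ≤ 1 / 2 + 8 * exp (-1) := by
  have hsqrt : √(2 * π) ≤ 3 := by
    rw [sqrt_le_left (by norm_num)]
    linarith [pi_lt_d2]
  have hexp : (5 / 16 : ℝ) ≤ exp (-1) := by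
    rw [exp_neg, show (5 / 16 : ℝ) = (16 / 5)⁻¹ by norm_num]
    exact inv_anti₀ (exp_pos 1) (by linarith [exp_one_lt_d9])
  linarith

theorem stmt7_general
    (V : ℝ → ℝ) (ε : ℝ) (hε : 0 < ε)
    (u : ℝ → ℝ) (hu : IsProbDensity u)
    (hmom : Integrable (fun x : ℝ => x ^ 2 * u x))
    (hVu : Integrable (fun x : ℝ => V x * u x)) :
    -(ε / 4) - 4 * ε * Real.exp (-1)
        + (∫ x : ℝ, (V x - ε / 4 * x ^ 2) * u x)
      ≤ freeEnergyMinus V ε u := by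
  have hhalf : Integrable fun x : ℝ => x ^ 2 / 2 * u x := by
    simpa [div_mul_eq_mul_div] using hmom.div_const 2
  have hentropy := integral_ite_mul_log_ge hu.2.1 (fun x => by positivity) hhalf
    integrable_exp_neg_sq_div_two
  rw [integral_exp_neg_sq_div_two] at hentropy
  have hsplit : ∫ x : ℝ, (V x - ε / 4 * x ^ 2) * u x
      = (∫ x : ℝ, V x * u x) - ε / 2 * ∫ x : ℝ, x ^ 2 / 2 * u x := by
    rw [← integral_const_mul, ← integral_sub hVu (hhalf.const_mul _)]
    congr 1 with x
    ring
  rw [freeEnergyMinus, hsplit]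
  linarith [mul_le_mul_of_nonneg_left hentropy (half_pos hε).le,
    mul_le_mul_of_nonneg_left sqrt_two_mul_pi_le (half_pos hε).le]

theorem stmt7
    (V : ℝ → ℝ) (hVmeas : Measurable V) (ε : ℝ) (hε : 0 < ε)
    (u : ℝ → ℝ) (hu : IsProbDensity u)
    (hmom : Integrable (fun x : ℝ => x ^ 2 * u x))
    (hVu : Integrable (fun x : ℝ => V x * u x)) :
    -(ε / 4) - 4 * ε * Real.exp (-1)
        + (∫ x : ℝ, (V x - ε / 4 * x ^ 2) * u x)
      ≤ freeEnergyMinus V ε u :=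
  stmt7_general V ε hε u hu hmom hVu
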